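/- arXiv:1108.5889 — 3 statements merged into one kernel-verified Lean document; each statement's English description precedes it below -/
import Mathlib

section
/- Let K be the convex hull of a finite set S of points in a finite-dimensional inner product space with 0 ∉ K, and let μ ∈ K be the element of minimal norm. Then for every nonzero vector λ, one has (min_{x ∈ S}(x, λ))/‖λ‖ ≤ ‖μ‖, with equality when λ = μ. In particular μ maximises the function λ ↦ m(λ)/‖λ‖ where m(λ) = min_{x ∈ K}(x, λ). -/
open scoped RealInnerProductSpace

/-!
The minimal-norm point `μ` of a convex set `K` satisfies the variational inequality
`‖μ‖² ≤ ⟪x, μ⟫` for all `x ∈ K`, so `min_S ⟪·, μ⟫ = ‖μ‖²`. For an arbitrary `λ`, a linear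
functional attains its minimum over `K = conv S` on `S`, hence
`min_S ⟪·, λ⟫ ≤ ⟪μ, λ⟫ ≤ ‖μ‖ ‖λ‖` by Cauchy–Schwarz.
-/

theorem Finset.inf'_le_of_mem_convexHull {𝕜 E β : Type*} [Field 𝕜] [LinearOrder 𝕜]
    [IsStrictOrderedRing 𝕜] [AddCommGroup E] [Module 𝕜 E] [AddCommGroup β] [LinearOrder β]
    [IsOrderedAddMonoid β] [Module 𝕜 β] [IsStrictOrderedModule 𝕜 β]
    {S : Finset E} (hS : S.Nonempty) {f : E → β}
    (hf : ConcaveOn 𝕜 (convexHull 𝕜 (S : Set E)) f) {y : E} (hy : y ∈ convexHull 𝕜 (S : Set E)) :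
    S.inf' hS f ≤ f y := by
  obtain ⟨x, hxS, hxy⟩ := hf.exists_le_of_mem_convexHull (subset_convexHull 𝕜 _) hy
  exact (S.inf'_le f hxS).trans hxy

theorem Convex.sq_norm_le_inner_of_forall_norm_le {F : Type*} [NormedAddCommGroup F]
    [InnerProductSpace ℝ F] {K : Set F} (hK : Convex ℝ K) {μ : F} (hμ : μ ∈ K)
    (hmin : ∀ x ∈ K, ‖μ‖ ≤ ‖x‖) {x : F} (hx : x ∈ K) : ‖μ‖ ^ 2 ≤ ⟪x, μ⟫ := by
  -- `μ` is the projection of `0` onto `K`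
  have hdist : ‖0 - μ‖ = ⨅ w : K, ‖0 - (w : F)‖ := by
    have : Nonempty K := ⟨⟨μ, hμ⟩⟩
    refine le_antisymm (le_ciInf fun w => by simpa using hmin w w.2) (ciInf_le ?_ (⟨μ, hμ⟩ : K))
    exact ⟨0, by rintro _ ⟨w, rfl⟩; positivity⟩
  have h := (norm_eq_iInf_iff_real_inner_le_zero hK hμ).mp hdist x hx
  rw [zero_sub, inner_neg_left, inner_sub_right, real_inner_self_eq_norm_sq,
    real_inner_comm] at h
  linarith

theorem inf'_inner_le_inner_of_mem_convexHull {F : Type*} [NormedAddCommGroup F]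
    [InnerProductSpace ℝ F] {S : Finset F} (hS : S.Nonempty) (lam : F) {y : F}
    (hy : y ∈ convexHull ℝ (S : Set F)) : (S.inf' hS fun x => ⟪x, lam⟫) ≤ ⟪y, lam⟫ :=
  S.inf'_le_of_mem_convexHull hS
    (((innerₗ F).flip lam).concaveOn (convex_convexHull ℝ _)) hy

theorem stmt4_general {E : Type*} [NormedAddCommGroup E] [InnerProductSpace ℝ E]
    (S : Finset E) (hS : S.Nonempty)
    (μ : E)
    (hμK : μ ∈ convexHull ℝ (S : Set E))
    (hmin : ∀ x ∈ convexHull ℝ (S : Set E), ‖μ‖ ≤ ‖x‖) :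
    (∀ lam : E, lam ≠ 0 → (S.inf' hS fun x => ⟪x, lam⟫) / ‖lam‖ ≤ ‖μ‖) ∧
      (S.inf' hS fun x => ⟪x, μ⟫) / ‖μ‖ = ‖μ‖ := by
  have hinf : (S.inf' hS fun x => ⟪x, μ⟫) = ‖μ‖ ^ 2 :=
    le_antisymm (by simpa [real_inner_self_eq_norm_sq] using
        inf'_inner_le_inner_of_mem_convexHull hS μ hμK)
      (S.le_inf' hS _ fun x hx => (convex_convexHull ℝ _).sq_norm_le_inner_of_forall_norm_le
        hμK hmin (subset_convexHull ℝ _ hx))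
  refine ⟨fun lam hlam => ?_, by rw [hinf, sq, mul_self_div_self]⟩
  rw [div_le_iff₀ (norm_pos_iff.mpr hlam)]
  calc (S.inf' hS fun x => ⟪x, lam⟫)
      ≤ ⟪μ, lam⟫ := inf'_inner_le_inner_of_mem_convexHull hS lam hμK
    _ ≤ ‖μ‖ * ‖lam‖ := real_inner_le_norm μ lam

/-- let `K` be the convex hull of a finite set `S` in a
finite-dimensional real inner product space with `0 ∉ K`, and let `μ ∈ K` be
the element of minimal norm.  Then for every nonzero `λ` one has
`(min_{x ∈ S} (x, λ)) / ‖λ‖ ≤ ‖μ‖`, with equality for `λ = μ`; in particular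
`μ` maximises `λ ↦ m(λ)/‖λ‖` where `m(λ) = min_{x ∈ K} (x, λ)`. -/
theorem stmt4 {E : Type*} [NormedAddCommGroup E] [InnerProductSpace ℝ E]
    [FiniteDimensional ℝ E] (S : Finset E) (hS : S.Nonempty)
    (h0 : (0 : E) ∉ convexHull ℝ (S : Set E)) (μ : E)
    (hμK : μ ∈ convexHull ℝ (S : Set E))
    (hmin : ∀ x ∈ convexHull ℝ (S : Set E), ‖μ‖ ≤ ‖x‖) :
    (∀ lam : E, lam ≠ 0 → (S.inf' hS fun x => ⟪x, lam⟫) / ‖lam‖ ≤ ‖μ‖) ∧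
      (S.inf' hS fun x => ⟪x, μ⟫) / ‖μ‖ = ‖μ‖ :=
  stmt4_general S hS μ hμK hmin
end

section
/- Let V be a vector space with finite weight-space decomposition indexed by a finite set of weights, let λ be a nonzero cocharacter with associated grading V = ⊕_i V(λ, i), and let v ∈ V(λ, k) for some k ∈ N. Let T be a torus whose cocharacter lattice contains λ, with inner product ( , ) on Y_Q(T), and let T^λ be the subtorus with Y_Q(T^λ) = λ^⊥. Then the minimal-norm point of the Newton polytope of v taken in Y_Q(T^λ) (i.e. after orthogonal projection onto λ^⊥) equals μ_T(v) − (k/(λ,λ)) λ, where μ_T(v) is the minimal-norm point of the Newton polytope of v in Y_Q(T). -/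
open scoped RealInnerProductSpace

/-
On the hyperplane `{x : ⟪x, λ⟫ = k}` the projection `x ↦ x - (⟪x, λ⟫ / ⟪λ, λ⟫) • λ` is the translation
by `-(k / ⟪λ, λ⟫) • λ`. Translation commutes with convex hulls, and translating along `λ` shifts the
squared norm of every point of that hyperplane by the same constant, so it preserves minimal-norm
points.
-/

section

variable {𝕜 E : Type*} [Ring 𝕜] [PartialOrder 𝕜] [AddCommGroup E] [Module 𝕜 E]

theorem convexHull_image_sub_const (a : E) (s : Set E) :
    convexHull 𝕜 ((· - a) '' s) = (· - a) '' convexHull 𝕜 s := by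
  have translate : (· - a) = ((-a) +ᵥ · : E → E) := funext fun x => (neg_add_eq_sub a x).symm
  rw [translate]
  exact convexHull_vadd (-a) s

end

section

variable {E : Type*} [NormedAddCommGroup E] [InnerProductSpace ℝ E]

theorem inner_eq_of_mem_convexHull {s : Set E} {v : E} {a : ℝ} (hs : ∀ x ∈ s, ⟪x, v⟫ = a)
    {x : E} (hx : x ∈ convexHull ℝ s) : ⟪x, v⟫ = a :=
  convexHull_min hs (convex_hyperplane (innerₛₗ ℝ |>.flip v).isLinear a) hx

theorem norm_sub_smul_le_norm_sub_smul_of_inner_eq {x y v : E} (hxy : ⟪x, v⟫ = ⟪y, v⟫)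
    (hnorm : ‖x‖ ≤ ‖y‖) (c : ℝ) : ‖x - c • v‖ ≤ ‖y - c • v‖ := by
  have expand (z : E) : ‖z - c • v‖ ^ 2 = ‖z‖ ^ 2 - 2 * c * ⟪z, v⟫ + c ^ 2 * ‖v‖ ^ 2 := by
    rw [norm_sub_sq_real, inner_smul_right, norm_smul, mul_pow, Real.norm_eq_abs, sq_abs]
    ring
  refine sq_le_sq₀ (norm_nonneg _) (norm_nonneg _) |>.mp ?_
  rw [expand, expand, hxy]
  gcongr

theorem norm_sub_smul_le_of_mem_image_sub_smul {s : Set E} {v μ : E}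
    (hs : ∀ x ∈ s, ⟪x, v⟫ = ⟪μ, v⟫) (hmin : ∀ x ∈ s, ‖μ‖ ≤ ‖x‖) (c : ℝ) : ∀ y ∈ (· - c • v) '' s, ‖μ - c • v‖ ≤ ‖y‖ := by
  rintro _ ⟨x, hx, rfl⟩
  exact norm_sub_smul_le_norm_sub_smul_of_inner_eq (hs x hx).symm (hmin x hx) c

end

theorem stmt6_general {E : Type*} [NormedAddCommGroup E] [InnerProductSpace ℝ E]
    (S : Finset E) (lam : E) (k : ℕ)
    (hk : ∀ x ∈ S, ⟪x, lam⟫ = (k : ℝ)) (μ : E)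
    (hμ : μ ∈ convexHull ℝ (S : Set E))
    (hmin : ∀ x ∈ convexHull ℝ (S : Set E), ‖μ‖ ≤ ‖x‖) :
    (μ - ((k : ℝ) / ⟪lam, lam⟫) • lam) ∈
        convexHull ℝ ((fun x => x - (⟪x, lam⟫ / ⟪lam, lam⟫) • lam) '' (S : Set E)) ∧
      ∀ y ∈ convexHull ℝ ((fun x => x - (⟪x, lam⟫ / ⟪lam, lam⟫) • lam) '' (S : Set E)),
        ‖μ - ((k : ℝ) / ⟪lam, lam⟫) • lam‖ ≤ ‖y‖ := by
  set c : ℝ := (k : ℝ) / ⟪lam, lam⟫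
  have projection_eq_translation :
      (fun x => x - (⟪x, lam⟫ / ⟪lam, lam⟫) • lam) '' (S : Set E) = (· - c • lam) '' S :=
    Set.image_congr fun x hx => by rw [hk x hx]
  have hull_on_hyperplane (x : E) (hx : x ∈ convexHull ℝ (S : Set E)) : ⟪x, lam⟫ = ⟪μ, lam⟫ := by
    rw [inner_eq_of_mem_convexHull hk hx, inner_eq_of_mem_convexHull hk hμ]
  rw [projection_eq_translation, convexHull_image_sub_const]
  exact ⟨⟨μ, hμ, rfl⟩, norm_sub_smul_le_of_mem_image_sub_smul hull_on_hyperplane hmin c⟩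

/-- Slodowy: suppose all points of the finite weight set `S` of a
vector `v ∈ V(λ, k)` lie on the affine hyperplane `{x : (x, λ) = k}` for a
nonzero `λ`.  Orthogonal projection onto `λ^⊥` (the cocharacter space of the
subtorus `T^λ`) sends `x ↦ x − ((x,λ)/(λ,λ)) λ`, and the minimal-norm point of
the projected Newton polytope is `μ_T(v) − (k/(λ,λ)) λ`, where `μ_T(v)` is the
minimal-norm point of the Newton polytope of `v`. -/
theorem stmt6 {E : Type*} [NormedAddCommGroup E] [InnerProductSpace ℝ E]
    [FiniteDimensional ℝ E] (S : Finset E) (lam : E) (hlam : lam ≠ 0) (k : ℕ)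
    (hk : ∀ x ∈ S, ⟪x, lam⟫ = (k : ℝ)) (μ : E)
    (hμ : μ ∈ convexHull ℝ (S : Set E))
    (hmin : ∀ x ∈ convexHull ℝ (S : Set E), ‖μ‖ ≤ ‖x‖) :
    (μ - ((k : ℝ) / ⟪lam, lam⟫) • lam) ∈
        convexHull ℝ ((fun x => x - (⟪x, lam⟫ / ⟪lam, lam⟫) • lam) '' (S : Set E)) ∧
      ∀ y ∈ convexHull ℝ ((fun x => x - (⟪x, lam⟫ / ⟪lam, lam⟫) • lam) '' (S : Set E)),
        ‖μ - ((k : ℝ) / ⟪lam, lam⟫) • lam‖ ≤ ‖y‖ :=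
  stmt6_general S lam k hk μ hμ hmin
end

section
/- Let G be a connected reductive group over an algebraically closed field, T a maximal torus, and λ ∈ Y(T) a nonzero primitive cocharacter. Let η be the unique (up to sign) primitive character in X(T) proportional to λ under the identification X_Q(T) ≅ Y_Q(T) via a W-invariant inner product. Then T^λ := ⟨im μ : μ ∈ Y(T), (μ, λ) = 0⟩ equals ker η, and the character group sequence 0 → X(T/T^λ) → X(T) → X(T^λ) → 0 is exact with X(T) ≅ Zη ⊕ X(T^λ). -/
/-- An element of a lattice `ℤ^n` is primitive if it is nonzero and not a
proper integer multiple of another lattice element. -/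
def IsPrimitiveVec {n : ℕ} (v : Fin n → ℤ) : Prop :=
  v ≠ 0 ∧ ∀ (d : ℤ) (w : Fin n → ℤ), v = d • w → IsUnit d

/-- The character of the split torus `T = (kˣ)^n` attached to `χ ∈ ℤ^n = X(T)`,
namely `t ↦ ∏ i, t i ^ χ i`. -/
def charHom {k : Type*} [Field k] {n : ℕ} (χ : Fin n → ℤ) :
    (Fin n → kˣ) →* kˣ where
  toFun t := ∏ i, t i ^ χ i
  map_one' := by simp
  map_mul' a b := by
    simp [Pi.mul_apply, mul_zpow, Finset.prod_mul_distrib]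

/-!
Choose `v ∈ ℤⁿ` with `η ⬝ᵥ v = 1` (Bézout, since `η` is primitive). Then
`x ↦ x - (η ⬝ᵥ x) v` projects `ℤⁿ` onto `η^⊥`, and every `t ∈ T` factors as
`∏ₐ (e_a - η_a v)(t_a) · v(η(t))⁻¹`. Hence `ker η` is generated by the images of the
cocharacters orthogonal to `η`, which over `ℚ` are exactly those `b`-orthogonal to `λ`.
A character `χ` trivial on `ker η` pairs to zero with each `e_j - η_j v` (the units of an
infinite field have no finite exponent), i.e. `χ = (v ⬝ᵥ χ) η`.
-/

theorem Finset.prod_zpow_eq_zpow_sum {G ι : Type*} [CommGroup G] (s : Finset ι)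
    (f : ι → ℤ) (ξ : G) : ∏ i ∈ s, ξ ^ f i = ξ ^ ∑ i ∈ s, f i := by
  classical
  induction s using Finset.induction_on with
  | empty => simp
  | insert _ _ h ih => rw [Finset.prod_insert h, Finset.sum_insert h, ih, zpow_add]

theorem eq_zero_of_forall_zpow_eq_one {k : Type*} [Field k] [Infinite k] {m : ℤ}
    (h : ∀ ξ : kˣ, ξ ^ m = 1) : m = 0 := by
  by_contra hm
  have : NeZero m.natAbs := ⟨Int.natAbs_ne_zero.mpr hm⟩
  have hroot (ξ : kˣ) : ξ ∈ rootsOfUnity m.natAbs k := by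
    rw [mem_rootsOfUnity, ← zpow_natCast, Int.natCast_natAbs]
    rcases abs_choice m with habs | habs <;> simp [habs, h]
  have : Finite kˣ := Finite.of_injective (fun ξ ↦ (⟨ξ, hroot ξ⟩ : rootsOfUnity m.natAbs k))
    fun _ _ h ↦ congrArg Subtype.val h
  have : Finite k := Finite.of_surjective (fun o : Option kˣ ↦ o.elim 0 Units.val) fun x ↦ by
    rcases eq_or_ne x 0 with rfl | hx
    exacts [⟨none, rfl⟩, ⟨some (Units.mk0 x hx), rfl⟩]
  exact not_finite k

section

variable {n : ℕ}

theorem IsPrimitiveVec.exists_dotProduct_eq_one {η : Fin n → ℤ} (hη : IsPrimitiveVec η) :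
    ∃ v : Fin n → ℤ, η ⬝ᵥ v = 1 := by
  have hdvd (i : Fin n) : Finset.univ.gcd η ∣ η i := Finset.gcd_dvd (Finset.mem_univ i)
  choose w hw using hdvd
  have hgcd : Finset.univ.gcd η = 1 := by
    rw [← Finset.normalize_gcd, normalize_eq_one]
    exact hη.2 _ w (funext hw)
  obtain ⟨v, hv⟩ := Finset.gcd_eq_sum_mul Finset.univ η
  exact ⟨v, hv.symm.trans hgcd⟩

theorem dotProduct_single_sub_smul {η v : Fin n → ℤ} (hv : η ⬝ᵥ v = 1) (a : Fin n) :
    η ⬝ᵥ (Pi.single a 1 - η a • v : Fin n → ℤ) = 0 := by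
  rw [dotProduct_sub, dotProduct_smul, hv, dotProduct_single]
  simp

theorem single_sub_smul_dotProduct (η v χ : Fin n → ℤ) (a : Fin n) :
    (Pi.single a 1 - η a • v : Fin n → ℤ) ⬝ᵥ χ = χ a - η a * (v ⬝ᵥ χ) := by
  rw [sub_dotProduct, smul_dotProduct, single_dotProduct]
  simp

variable {k : Type*} [Field k]

@[simp]
theorem charHom_apply (χ : Fin n → ℤ) (t : Fin n → kˣ) : charHom χ t = ∏ i, t i ^ χ i :=
  rfl

theorem charHom_zsmul_apply (a : ℤ) (χ : Fin n → ℤ) (t : Fin n → kˣ) :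
    charHom (a • χ) t = charHom χ t ^ a := by
  simp only [charHom_apply, ← Finset.prod_zpow, ← zpow_mul, Pi.smul_apply, smul_eq_mul, mul_comm]

theorem charHom_cochar (χ μ : Fin n → ℤ) (ξ : kˣ) :
    charHom χ (fun i ↦ ξ ^ μ i) = ξ ^ (μ ⬝ᵥ χ) := by
  simp only [charHom_apply, ← zpow_mul, Finset.prod_zpow_eq_zpow_sum, dotProduct]

theorem prod_cochar_single_sub_smul (η v : Fin n → ℤ) (t : Fin n → kˣ) :
    ∏ a, (fun i ↦ t a ^ (Pi.single a 1 - η a • v : Fin n → ℤ) i) =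
      t * fun i ↦ (charHom η t ^ v i)⁻¹ := by
  funext j
  simp only [Finset.prod_apply, Pi.sub_apply, Pi.smul_apply, smul_eq_mul, zpow_sub, zpow_mul,
    Pi.mul_apply, charHom_apply]
  rw [Finset.prod_mul_distrib, Finset.prod_inv_distrib, Finset.prod_zpow]
  simp [Pi.single_apply]

theorem closure_cochar_eq_ker_charHom {η : Fin n → ℤ} (hη : IsPrimitiveVec η) :
    Subgroup.closure {t : Fin n → kˣ | ∃ μ, η ⬝ᵥ μ = 0 ∧ ∃ ξ : kˣ, t = fun i ↦ ξ ^ μ i} =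
      (charHom η).ker := by
  obtain ⟨v, hv⟩ := hη.exists_dotProduct_eq_one
  apply le_antisymm
  · rw [Subgroup.closure_le]
    rintro _ ⟨μ, hμ, ξ, rfl⟩
    rw [SetLike.mem_coe, MonoidHom.mem_ker, charHom_cochar, dotProduct_comm, hμ, zpow_zero]
  · intro t ht
    have hfactor : t = ∏ a, fun i ↦ t a ^ (Pi.single a 1 - η a • v : Fin n → ℤ) i := by
      rw [prod_cochar_single_sub_smul, MonoidHom.mem_ker.mp ht]
      simp [← Pi.one_def]
    rw [hfactor]
    exact Subgroup.prod_mem _ fun a _ ↦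
      Subgroup.subset_closure ⟨_, dotProduct_single_sub_smul hv a, t a, rfl⟩

theorem forall_mem_ker_charHom_eq_one_iff [Infinite k] {η : Fin n → ℤ} (hη : IsPrimitiveVec η)
    (χ : Fin n → ℤ) :
    (∀ t ∈ (charHom (k := k) η).ker, charHom χ t = 1) ↔ ∃ a : ℤ, χ = a • η := by
  constructor
  · intro h
    obtain ⟨v, hv⟩ := hη.exists_dotProduct_eq_one
    refine ⟨v ⬝ᵥ χ, funext fun j ↦ ?_⟩
    have hpair : (Pi.single j 1 - η j • v : Fin n → ℤ) ⬝ᵥ χ = 0 :=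
      eq_zero_of_forall_zpow_eq_one (k := k) fun ξ ↦ by
        rw [← charHom_cochar]
        apply h
        rw [MonoidHom.mem_ker, charHom_cochar, dotProduct_comm, dotProduct_single_sub_smul hv,
          zpow_zero]
    rw [single_sub_smul_dotProduct, sub_eq_zero] at hpair
    simp [hpair, mul_comm]
  · rintro ⟨a, rfl⟩ t ht
    rw [charHom_zsmul_apply, MonoidHom.mem_ker.mp ht, one_zpow]

end

theorem stmt10_general {k : Type*} [Field k] [IsAlgClosed k] (n : ℕ)
    (b : (Fin n → ℚ) →ₗ[ℚ] (Fin n → ℚ) →ₗ[ℚ] ℚ)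
    (hsymm : ∀ x y, b x y = b y x)
    (lam : Fin n → ℤ)
    (η : Fin n → ℤ) (hηprim : IsPrimitiveVec η)
    (hprop : ∃ c : ℚ, c ≠ 0 ∧ ∀ μ : Fin n → ℚ,
      (∑ i, (η i : ℚ) * μ i) = c * b (fun i => (lam i : ℚ)) μ) :
    (Subgroup.closure {t : Fin n → kˣ |
        ∃ μ : Fin n → ℤ, b (fun i => (μ i : ℚ)) (fun i => (lam i : ℚ)) = 0 ∧
          ∃ ξ : kˣ, t = fun i => ξ ^ μ i}
      = (charHom (k := k) η).ker) ∧
    ({χ : Fin n → ℤ | ∀ t ∈ (charHom (k := k) η).ker, charHom (k := k) χ t = 1}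
      = {χ : Fin n → ℤ | ∃ a : ℤ, χ = a • η}) := by
  obtain ⟨c, hc, hcb⟩ := hprop
  have horth (μ : Fin n → ℤ) :
      b (fun i ↦ (μ i : ℚ)) (fun i ↦ (lam i : ℚ)) = 0 ↔ η ⬝ᵥ μ = 0 := by
    have hcast : ((η ⬝ᵥ μ : ℤ) : ℚ) = c * b (fun i ↦ (lam i : ℚ)) (fun i ↦ (μ i : ℚ)) := by
      rw [← hcb]
      push_cast [dotProduct]
      rfl
    rw [hsymm, ← Int.cast_eq_zero (α := ℚ), hcast, mul_eq_zero, or_iff_right hc]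
  refine ⟨?_, Set.ext fun χ ↦ forall_mem_ker_charHom_eq_one_iff hηprim χ⟩
  simp_rw [horth]
  exact closure_cochar_eq_ker_charHom hηprim

/-- let `T = (kˣ)^n` be a maximal torus (with `X(T) = Y(T) = ℤ^n`),
`b` a positive definite symmetric form on `Y_ℚ(T)` (coming from a `W`-invariant
inner product), `λ ∈ Y(T)` a nonzero primitive cocharacter, and `η ∈ X(T)` the
primitive character proportional to `λ` under the identification
`X_ℚ(T) ≅ Y_ℚ(T)` given by `b`.  Then the subgroup
`T^λ = ⟨im μ : μ ∈ Y(T), b(μ, λ) = 0⟩` equals `ker η`, and the characters of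
`T` vanishing on `T^λ` are exactly the multiples of `η`; hence
`0 → X(T/T^λ) → X(T) → X(T^λ) → 0` is exact with `X(T) ≅ ℤη ⊕ X(T^λ)`. -/
theorem stmt10 {k : Type*} [Field k] [IsAlgClosed k] (n : ℕ)
    (b : (Fin n → ℚ) →ₗ[ℚ] (Fin n → ℚ) →ₗ[ℚ] ℚ)
    (hsymm : ∀ x y, b x y = b y x) (hpos : ∀ x, x ≠ 0 → 0 < b x x)
    (lam : Fin n → ℤ) (hlamprim : IsPrimitiveVec lam)
    (η : Fin n → ℤ) (hηprim : IsPrimitiveVec η)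
    (hprop : ∃ c : ℚ, c ≠ 0 ∧ ∀ μ : Fin n → ℚ,
      (∑ i, (η i : ℚ) * μ i) = c * b (fun i => (lam i : ℚ)) μ) :
    (Subgroup.closure {t : Fin n → kˣ |
        ∃ μ : Fin n → ℤ, b (fun i => (μ i : ℚ)) (fun i => (lam i : ℚ)) = 0 ∧
          ∃ ξ : kˣ, t = fun i => ξ ^ μ i}
      = (charHom (k := k) η).ker) ∧
    ({χ : Fin n → ℤ | ∀ t ∈ (charHom (k := k) η).ker, charHom (k := k) χ t = 1}
      = {χ : Fin n → ℤ | ∃ a : ℤ, χ = a • η}) :=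
  stmt10_general n b hsymm lam η hηprim hprop
end
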